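/- ε-rank bound for a Cauchy matrix with nodes in opposite disks: Let E = {z ∈ ℂ : |z − z₀| ≤ η} with z₀, η ∈ ℝ and 0 < η < z₀, let φ = √(z₀² − η²), and let μ₁ = (z₀ + φ)/(z₀ − φ). Let C ∈ ℂ^{m×n} (m ≥ n) be the Cauchy matrix with entries C_{ij} = 1/(z_i − w_j), where z_1, …, z_m ∈ E and w_1, …, w_n ∈ −E. Then for every 0 < ε < 1, rank_ε(C) ≤ ⌈ log(1/ε) / log(μ₁) ⌉. -/

import Mathlib

/-! If `r = p / q` has type `(k, k)`, then `C - D_{r(z)} C D_{1/r(w)}` has entries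
`(p(wⱼ) q(zᵢ) - q(wⱼ) p(zᵢ)) / ((zᵢ - wⱼ) q(zᵢ) p(wⱼ))`, whose numerator divided by `zᵢ - wⱼ` is a
polynomial of degree `< k` in `zᵢ`; so it has rank at most `k`, and
`σ_{k+1}(C) ≤ ‖C‖₂ · max |r(zᵢ)| · max |1 / r(wⱼ)|`. For `r(u) = ((u - φ) / (u + φ))ᵏ` both maxima
are at most `(η / (z₀ + φ))ᵏ`, and `(η / (z₀ + φ))² = 1 / μ₁`. -/

/-- The spectral norm of a complex matrix. -/
noncomputable def specNorm {m n : ℕ} (M : Matrix (Fin m) (Fin n) ℂ) : ℝ :=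
  ‖LinearMap.toContinuousLinearMap (Matrix.toEuclideanLin M)‖

/-- The `j`-th largest singular value of a complex matrix (for `j ≥ 1`), via the
Eckart–Young characterization `σ_j(M) = min {‖M - N‖₂ : rank N < j}`. -/
noncomputable def singularValue {m n : ℕ} (M : Matrix (Fin m) (Fin n) ℂ) (j : ℕ) : ℝ :=
  sInf ((fun N : Matrix (Fin m) (Fin n) ℂ => specNorm (M - N)) '' {N | N.rank < j})

/-- The `ε`-rank of a matrix: the smallest `k` with `σ_{k+1}(M) ≤ ε ‖M‖₂`. -/
noncomputable def epsRank {m n : ℕ} (M : Matrix (Fin m) (Fin n) ℂ) (ε : ℝ) : ℕ :=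
  sInf {k : ℕ | singularValue M (k + 1) ≤ ε * specNorm M}

open Polynomial Matrix
open scoped Matrix.Norms.L2Operator

lemma specNorm_eq_norm {m n : ℕ} (M : Matrix (Fin m) (Fin n) ℂ) : specNorm M = ‖M‖ := rfl

lemma singularValue_le_specNorm_sub {m n j : ℕ} (M N : Matrix (Fin m) (Fin n) ℂ)
    (hN : N.rank < j) : singularValue M j ≤ specNorm (M - N) :=
  csInf_le ⟨0, by rintro _ ⟨N', -, rfl⟩; exact norm_nonneg _⟩ ⟨N, hN, rfl⟩

lemma epsRank_le_of_specNorm_sub_le {m n k : ℕ} {M N : Matrix (Fin m) (Fin n) ℂ} {ε : ℝ}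
    (hN : N.rank ≤ k) (h : specNorm (M - N) ≤ ε * specNorm M) : epsRank M ε ≤ k :=
  Nat.sInf_le ((singularValue_le_specNorm_sub M N (Nat.lt_succ_of_le hN)).trans h)

lemma specNorm_diagonal_mul_mul_diagonal_le {m n : ℕ} (d₁ : Fin m → ℂ)
    (M : Matrix (Fin m) (Fin n) ℂ) (d₂ : Fin n → ℂ) {a b : ℝ} (ha : 0 ≤ a) (hb : 0 ≤ b)
    (hd₁ : ∀ i, ‖d₁ i‖ ≤ a) (hd₂ : ∀ j, ‖d₂ j‖ ≤ b) :
    specNorm (diagonal d₁ * M * diagonal d₂) ≤ a * b * specNorm M := by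
  have h₁ : ‖diagonal d₁‖ ≤ a := by
    rw [l2_opNorm_diagonal]; exact (pi_norm_le_iff_of_nonneg ha).2 hd₁
  have h₂ : ‖diagonal d₂‖ ≤ b := by
    rw [l2_opNorm_diagonal]; exact (pi_norm_le_iff_of_nonneg hb).2 hd₂
  calc ‖diagonal d₁ * M * diagonal d₂‖ ≤ ‖diagonal d₁‖ * ‖M‖ * ‖diagonal d₂‖ :=
        (l2_opNorm_mul _ _).trans (by gcongr; exact l2_opNorm_mul _ _)
    _ ≤ a * ‖M‖ * b := by gcongr
    _ = a * b * specNorm M := by rw [specNorm_eq_norm]; ring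

section Cauchy

variable {R K ι κ : Type*}

def cauchyMatrix [Field K] (z : ι → K) (w : κ → K) : Matrix ι κ K :=
  Matrix.of fun i j => (z i - w j)⁻¹

lemma exists_X_sub_C_mul_eq_of_natDegree_le [CommRing R] [Nontrivial R] {p q : R[X]} {k : ℕ}
    (hp : p.natDegree ≤ k) (hq : q.natDegree ≤ k) (w : R) :
    ∃ S : R[X], S.degree < k ∧ (X - C w) * S = C (p.eval w) * q - C (q.eval w) * p := by
  set F := C (p.eval w) * q - C (q.eval w) * p
  refine ⟨F /ₘ (X - C w), ?_, mul_divByMonic_eq_iff_isRoot.2 (by simp [F, mul_comm])⟩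
  rcases eq_or_ne F 0 with hF | hF
  · simp [hF]
  have hFk : F.natDegree ≤ k := (natDegree_sub_le_of_le
    ((natDegree_C_mul_le _ _).trans hq) ((natDegree_C_mul_le _ _).trans hp)).trans_eq (max_self k)
  exact (degree_divByMonic_lt F _ hF (by simp)).trans_le (degree_le_of_natDegree_le hFk)

lemma eval_eq_sum_fin_of_degree_lt [Semiring R] {S : R[X]} {k : ℕ} (hS : S.degree < k) (x : R) :
    S.eval x = ∑ a : Fin k, S.coeff a * x ^ (a : ℕ) := by
  rw [eval_eq_sum, ← sum_fin (fun e a => a * x ^ e) (fun _ => zero_mul _) hS]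

theorem exists_rank_le_cauchyMatrix_sub_eq [Field K] [Fintype ι] [Fintype κ] [DecidableEq ι]
    [DecidableEq κ] {p q : K[X]} {k : ℕ}
    (hp : p.natDegree ≤ k) (hq : q.natDegree ≤ k) {z : ι → K} {w : κ → K}
    (hzw : ∀ i j, z i ≠ w j) (hqz : ∀ i, q.eval (z i) ≠ 0) (hpw : ∀ j, p.eval (w j) ≠ 0) :
    ∃ N : Matrix ι κ K, N.rank ≤ k ∧ cauchyMatrix z w - N =
      diagonal (fun i => p.eval (z i) / q.eval (z i)) * cauchyMatrix z w *
        diagonal (fun j => q.eval (w j) / p.eval (w j)) := by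
  choose S hSk hS using fun j => exists_X_sub_C_mul_eq_of_natDegree_le hp hq (w j)
  let A : Matrix ι (Fin k) K := Matrix.of fun i a => z i ^ (a : ℕ) / q.eval (z i)
  let B : Matrix (Fin k) κ K := Matrix.of fun a j => (S j).coeff a / p.eval (w j)
  refine ⟨A * B, (rank_mul_le_left A B).trans ((rank_le_card_width A).trans_eq (by simp)), ?_⟩
  ext i j
  have hAB : (A * B) i j = (S j).eval (z i) / (q.eval (z i) * p.eval (w j)) := by
    rw [eval_eq_sum_fin_of_degree_lt (hSk j), Finset.sum_div, mul_apply]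
    refine Finset.sum_congr rfl fun a _ => ?_
    simp only [A, B, of_apply]
    ring
  have hSz := congrArg (eval (z i)) (hS j)
  simp only [eval_mul, eval_sub, eval_C, eval_X] at hSz
  have hzw' := sub_ne_zero.2 (hzw i j)
  rw [Matrix.sub_apply, mul_diagonal, diagonal_mul, hAB]
  simp only [cauchyMatrix, of_apply]
  field_simp [hqz i, hpw j, hzw']
  linear_combination -hSz

end Cauchy

section Disk

variable {z₀ η φ : ℝ}

lemma re_pos_of_norm_sub_le (hz : η < z₀) {u : ℂ} (hu : ‖u - z₀‖ ≤ η) : 0 < u.re := by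
  have h := (Complex.abs_re_le_norm (u - z₀)).trans hu
  rw [Complex.sub_re, Complex.ofReal_re] at h
  linarith [neg_abs_le (u.re - z₀)]

-- `±φ` are the points symmetric with respect to both `E` and `-E`; this is where `φ` comes from.
lemma norm_sub_div_add_le (hz₀ : 0 < z₀) (hφ : 0 ≤ φ) (hφ2 : φ ^ 2 = z₀ ^ 2 - η ^ 2) {u : ℂ}
    (hu : ‖u - z₀‖ ≤ η) : ‖(u - φ) / (u + φ)‖ ≤ η / (z₀ + φ) := by
  have hη : 0 ≤ η := (norm_nonneg _).trans hu
  rcases eq_or_ne (u + φ) 0 with h0 | h0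
  · rw [h0, div_zero, norm_zero]; positivity
  rw [norm_div, div_le_div_iff₀ (norm_pos_iff.2 h0) (by positivity), mul_comm]
  have key : ((z₀ + φ) * ‖u - φ‖) ^ 2 - (η * ‖u + φ‖) ^ 2
      = 2 * φ * (z₀ + φ) * (‖u - z₀‖ ^ 2 - η ^ 2) := by
    simp only [mul_pow, Complex.sq_norm, Complex.normSq_apply, Complex.sub_re, Complex.sub_im,
      Complex.add_re, Complex.add_im, Complex.ofReal_re, Complex.ofReal_im]
    linear_combination (2 * φ * z₀ + φ ^ 2 - 2 * φ * u.re - u.re ^ 2 - u.im ^ 2) * hφ2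
  have hsq : ((z₀ + φ) * ‖u - φ‖) ^ 2 ≤ (η * ‖u + φ‖) ^ 2 := by
    have : ‖u - z₀‖ ^ 2 ≤ η ^ 2 := by gcongr
    nlinarith [mul_nonneg hφ (by positivity : (0 : ℝ) ≤ z₀ + φ)]
  exact (pow_le_pow_iff_left₀ (by positivity) (by positivity) two_ne_zero).1 hsq

theorem exists_rank_le_specNorm_cauchyMatrix_sub_le {m n : ℕ} (hη : 0 ≤ η) (hz : η < z₀)
    (hφ : 0 ≤ φ) (hφ2 : φ ^ 2 = z₀ ^ 2 - η ^ 2) {z : Fin m → ℂ} {w : Fin n → ℂ}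
    (hzE : ∀ i, ‖z i - z₀‖ ≤ η) (hwE : ∀ j, ‖-w j - z₀‖ ≤ η) (k : ℕ) :
    ∃ N : Matrix (Fin m) (Fin n) ℂ, N.rank ≤ k ∧
      specNorm (cauchyMatrix z w - N) ≤
        (η / (z₀ + φ)) ^ (2 * k) * specNorm (cauchyMatrix z w) := by
  have hz₀ : 0 < z₀ := hη.trans_lt hz
  have hzre i : 0 < (z i).re := re_pos_of_norm_sub_le hz (hzE i)
  have hwre j : (w j).re < 0 := by simpa using re_pos_of_norm_sub_le hz (hwE j)
  obtain ⟨N, hN, hCN⟩ := exists_rank_le_cauchyMatrix_sub_eq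
    (p := (X - C (φ : ℂ)) ^ k) (q := (X + C (φ : ℂ)) ^ k) (k := k) (z := z) (w := w)
    (by simp) (by simp)
    (fun i j h => by linarith [hzre i, hwre j, congrArg Complex.re h])
    (fun i => by
      simpa using pow_ne_zero k (Complex.ne_zero_of_re_pos (by simp; linarith [hzre i])))
    (fun j => by
      simpa using pow_ne_zero k (neg_ne_zero.2 (Complex.ne_zero_of_re_pos (s := φ - w j)
        (by simp; linarith [hwre j]))))
  refine ⟨N, hN, ?_⟩
  rw [hCN, pow_mul', sq]
  refine specNorm_diagonal_mul_mul_diagonal_le _ _ _ (by positivity) (by positivity)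
    (fun i => ?_) (fun j => ?_) <;>
    simp only [eval_pow, eval_sub, eval_add, eval_X, eval_C, ← div_pow, norm_pow] <;>
    gcongr
  · exact norm_sub_div_add_le hz₀ hφ hφ2 (hzE i)
  · rw [← neg_div_neg_eq, neg_add', neg_sub', sub_neg_eq_add]
    exact norm_sub_div_add_le hz₀ hφ hφ2 (hwE j)

end Disk

lemma inv_pow_ceil_log_div_log_le {μ ε : ℝ} (hμ : 1 < μ) (hε : 0 < ε) :
    μ⁻¹ ^ ⌈Real.log (1 / ε) / Real.log μ⌉₊ ≤ ε := by
  set k := ⌈Real.log (1 / ε) / Real.log μ⌉₊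
  have hlog : Real.log (1 / ε) ≤ Real.log (μ ^ k) := by
    rw [Real.log_pow, ← div_le_iff₀ (Real.log_pos hμ)]
    exact Nat.le_ceil _
  have hμk : ε⁻¹ ≤ μ ^ k := by
    simpa using (Real.log_le_log_iff (by positivity) (by positivity)).1 hlog
  rwa [inv_pow, inv_le_comm₀ (by positivity) hε]

theorem cauchy_epsRank_bound_general {m n : ℕ} (z₀ η : ℝ)
    (hη : 0 < η) (hz : η < z₀)
    (φ : ℝ) (hφ : φ = Real.sqrt (z₀ ^ 2 - η ^ 2))
    (μ₁ : ℝ) (hμ : μ₁ = (z₀ + φ) / (z₀ - φ))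
    (z : Fin m → ℂ) (w : Fin n → ℂ)
    (hzE : ∀ i, ‖z i - (z₀ : ℂ)‖ ≤ η)
    (hwE : ∀ j, ‖-(w j) - (z₀ : ℂ)‖ ≤ η)
    (C : Matrix (Fin m) (Fin n) ℂ) (hC : ∀ i j, C i j = (z i - w j)⁻¹)
    (ε : ℝ) (hε0 : 0 < ε) :
    epsRank C ε ≤ ⌈Real.log (1 / ε) / Real.log μ₁⌉₊ := by
  have hz₀ : 0 < z₀ := hη.trans hz
  have hφ2 : φ ^ 2 = z₀ ^ 2 - η ^ 2 := by rw [hφ]; exact Real.sq_sqrt (by nlinarith)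
  have hφ0 : 0 < φ := by rw [hφ]; exact Real.sqrt_pos.2 (by nlinarith)
  have hφz : φ < z₀ := by nlinarith
  have hμ₁ : 1 < μ₁ := by rw [hμ]; exact (one_lt_div (by linarith)).2 (by linarith)
  have hρ : (η / (z₀ + φ)) ^ 2 = μ₁⁻¹ := by
    rw [hμ, inv_div, div_pow, div_eq_div_iff (by positivity) (by positivity)]
    linear_combination (z₀ + φ) * hφ2
  obtain ⟨N, hN, hCN⟩ := exists_rank_le_specNorm_cauchyMatrix_sub_le hη.le hz hφ0.le hφ2 hzE hwE
    ⌈Real.log (1 / ε) / Real.log μ₁⌉₊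
  rw [show cauchyMatrix z w = C from (Matrix.ext hC).symm, pow_mul, hρ] at hCN
  refine epsRank_le_of_specNorm_sub_le hN (hCN.trans ?_)
  exact mul_le_mul_of_nonneg_right (inv_pow_ceil_log_div_log_le hμ₁ hε0) (norm_nonneg _)

/-- **ε-rank bound for a Cauchy matrix with nodes in opposite disks.**
If `C_{ij} = 1/(zᵢ - wⱼ)` with `zᵢ ∈ E = {z : |z - z₀| ≤ η}`, `wⱼ ∈ -E`
(`0 < η < z₀`, `m ≥ n`), `φ = √(z₀² - η²)`, `μ₁ = (z₀ + φ)/(z₀ - φ)`, then for every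
`0 < ε < 1`, `rank_ε(C) ≤ ⌈log(1/ε)/log(μ₁)⌉`. -/
theorem cauchy_epsRank_bound {m n : ℕ} (hmn : n ≤ m) (z₀ η : ℝ)
    (hη : 0 < η) (hz : η < z₀)
    (φ : ℝ) (hφ : φ = Real.sqrt (z₀ ^ 2 - η ^ 2))
    (μ₁ : ℝ) (hμ : μ₁ = (z₀ + φ) / (z₀ - φ))
    (z : Fin m → ℂ) (w : Fin n → ℂ)
    (hzE : ∀ i, ‖z i - (z₀ : ℂ)‖ ≤ η)
    (hwE : ∀ j, ‖-(w j) - (z₀ : ℂ)‖ ≤ η)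
    (C : Matrix (Fin m) (Fin n) ℂ) (hC : ∀ i j, C i j = (z i - w j)⁻¹)
    (ε : ℝ) (hε0 : 0 < ε) (hε1 : ε < 1) :
    epsRank C ε ≤ ⌈Real.log (1 / ε) / Real.log μ₁⌉₊ :=
  cauchy_epsRank_bound_general z₀ η hη hz φ hφ μ₁ hμ z w hzE hwE C hC ε hε0
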